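/- The matrix (1/2)·[[2,1,1,0],[0,2,1,1],[1,0,2,1],[1,1,0,2]]/2, i.e., the 4×4 matrix C with entries C = (1/4)[[2,1,1,0],[0,2,1,1],[1,0,2,1],[1,1,0,2]], has no qubit implementation: there do not exist density matrices ρ_1,…,ρ_4 on ℂ² and a 4-outcome POVM M on ℂ² with C_{ij} = tr(ρ_i M(j)). -/

import Mathlib

/-!
Suppose `C a b = tr(ρ a * M b)` with qubit states and effects. Since `C (b + 1) b = 0` and both
factors are positive semidefinite, `ρ (b + 1) * M b = 0`; since `C b b ≠ 0`, `M b ≠ 0`, so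
`ρ (b + 1)` is singular, i.e. a pure state, and `M b = t b • (1 - ρ (b + 1))` with
`t b = tr (M b)`. Hence `C a b = t b * (1 - tr (ρ a * ρ (b + 1)))`: with
`x b = 1 - tr (ρ b * ρ (b + 1))` the diagonal entries are `t b * x b` and the entries
`C (b + 2) b` are `t b * x (b + 1)`. Multiplying around the cycle `Fin 4` gives `(1/2)^4 = (1/4)^4`.
-/

open Matrix BigOperators
open scoped ComplexOrder

/-- A quantum (dimension-d) implementation of a communication matrix `C`:
states `ρ` are density matrices, `M` is a POVM, and `C a b = tr(ρ_a M(b))`. -/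
def QImpl {d n m : ℕ} (C : Matrix (Fin n) (Fin m) ℝ)
    (ρ : Fin n → Matrix (Fin d) (Fin d) ℂ) (M : Fin m → Matrix (Fin d) (Fin d) ℂ) : Prop :=
  (∀ a, (ρ a).PosSemidef) ∧ (∀ a, (ρ a).trace = 1) ∧
  (∀ b, (M b).PosSemidef) ∧ (∑ b, M b) = 1 ∧
  ∀ a b, (C a b : ℂ) = (ρ a * M b).trace

namespace Matrix

open scoped MatrixOrder in
theorem PosSemidef.mul_eq_zero_of_trace_mul_eq_zero {𝕜 n : Type*} [RCLike 𝕜] [Fintype n]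
    {A B : Matrix n n 𝕜} (hA : A.PosSemidef) (hB : B.PosSemidef) (h : (A * B).trace = 0) :
    A * B = 0 := by
  classical
  obtain ⟨a, rfl⟩ := CStarAlgebra.nonneg_iff_eq_star_mul_self.mp hA.nonneg
  obtain ⟨b, rfl⟩ := CStarAlgebra.nonneg_iff_eq_star_mul_self.mp hB.nonneg
  simp only [star_eq_conjTranspose] at h ⊢
  have hab : a * bᴴ = 0 := by
    rw [← trace_mul_conjTranspose_self_eq_zero_iff, ← h, conjTranspose_mul,
      conjTranspose_conjTranspose, ← Matrix.mul_assoc, trace_mul_comm]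
    simp only [Matrix.mul_assoc]
  calc aᴴ * a * (bᴴ * b) = aᴴ * (a * bᴴ) * b := by simp only [Matrix.mul_assoc]
    _ = 0 := by rw [hab, Matrix.mul_zero, Matrix.zero_mul]

variable {R : Type*} [CommRing R]

theorem det_one_sub_fin_two (A : Matrix (Fin 2) (Fin 2) R) :
    (1 - A).det = 1 - A.trace + A.det := by
  simp only [det_fin_two, trace_fin_two, sub_apply, one_apply_eq,
    one_apply_ne (by decide : (0 : Fin 2) ≠ 1), one_apply_ne (by decide : (1 : Fin 2) ≠ 0)]
  ring

/-- A singular `2 × 2` matrix has rank at most one, `Q = u vᵀ`, so `Q A Q = (vᵀ A u) Q`. -/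
theorem mul_mul_self_eq_trace_smul_of_det_eq_zero {Q : Matrix (Fin 2) (Fin 2) R} (hQ : Q.det = 0)
    (A : Matrix (Fin 2) (Fin 2) R) : Q * A * Q = (Q * A).trace • Q := by
  rw [det_fin_two] at hQ
  ext i j
  fin_cases i <;> fin_cases j <;>
    simp only [mul_apply, trace, diag, Fin.sum_univ_two, smul_apply, smul_eq_mul, Fin.isValue,
      Fin.mk_zero, Fin.mk_one]
  · linear_combination -(A 1 1) * hQ
  · linear_combination A 0 1 * hQ
  · linear_combination A 1 0 * hQ
  · linear_combination -(A 0 0) * hQ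

theorem eq_trace_smul_one_sub_of_mul_eq_zero [StarRing R] {ρ M : Matrix (Fin 2) (Fin 2) R}
    (hρ : ρ.IsHermitian) (hM : M.IsHermitian) (hρ1 : ρ.trace = 1) (hρ0 : ρ.det = 0)
    (h : ρ * M = 0) : M = M.trace • (1 - ρ) := by
  have h' : M * ρ = 0 := by
    simpa [conjTranspose_mul, hρ.eq, hM.eq] using congrArg conjTranspose h
  have hsandwich : (1 - ρ) * M * (1 - ρ) = M := by
    simp only [sub_mul, mul_sub, Matrix.one_mul, Matrix.mul_one, h, h']
    simp
  have hdet : (1 - ρ).det = 0 := by rw [det_one_sub_fin_two, hρ1, hρ0]; ring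
  conv_lhs => rw [← hsandwich, mul_mul_self_eq_trace_smul_of_det_eq_zero hdet]
  rw [sub_mul, Matrix.one_mul, trace_sub, h, trace_zero, sub_zero]

end Matrix

theorem Fin.pow_eq_pow_of_mul_eq_of_mul_succ_eq {n : ℕ} [NeZero n] {M : Type*} [CommMonoid M]
    (t x : Fin n → M) {α β : M} (hα : ∀ b, t b * x b = α)
    (hβ : ∀ b, t b * x (b + 1) = β) : α ^ n = β ^ n := by
  calc α ^ n = ∏ b, t b * x b := by simp [hα]
    _ = ∏ b, t b * x (b + 1) := by
      rw [Finset.prod_mul_distrib, Finset.prod_mul_distrib,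
        ← Equiv.prod_comp (Equiv.addRight (1 : Fin n)) x]
      rfl
    _ = β ^ n := by simp [hβ]

theorem eq_trace_smul_one_sub_of_trace_mul_eq_zero {ρ M : Matrix (Fin 2) (Fin 2) ℂ}
    (hρ : ρ.PosSemidef) (hρ1 : ρ.trace = 1) (hM : M.PosSemidef) (hM0 : M ≠ 0)
    (h : (ρ * M).trace = 0) : M = M.trace • (1 - ρ) := by
  have hρM : ρ * M = 0 := hρ.mul_eq_zero_of_trace_mul_eq_zero hM h
  have hρ0 : ρ.det = 0 := by
    by_contra hdet
    have hunit : IsUnit ρ := (isUnit_iff_isUnit_det ρ).mpr (isUnit_iff_ne_zero.mpr hdet)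
    exact hM0 (hunit.mul_right_eq_zero.mp hρM)
  exact eq_trace_smul_one_sub_of_mul_eq_zero hρ.isHermitian hM.isHermitian hρ1 hρ0 hρM

theorem QImpl.pow_eq_pow_of_subdiag_eq_zero {n : ℕ} [NeZero n] {C : Matrix (Fin n) (Fin n) ℝ}
    {ρ M : Fin n → Matrix (Fin 2) (Fin 2) ℂ} (h : QImpl C ρ M) {α β : ℝ} (hα0 : α ≠ 0)
    (hα : ∀ b, C b b = α) (h0 : ∀ b, C (b + 1) b = 0) (hβ : ∀ b, C (b + 2) b = β) :
    α ^ n = β ^ n := by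
  obtain ⟨hρ, hρ1, hM, -, hC⟩ := h
  have hM_eq (b : Fin n) : M b = (M b).trace • (1 - ρ (b + 1)) :=
    eq_trace_smul_one_sub_of_trace_mul_eq_zero (hρ _) (hρ1 _) (hM b)
      (fun hb ↦ hα0 (by simpa [hb, hα] using hC b b)) (by rw [← hC, h0]; simp)
  have hC_eq (a b : Fin n) : (C a b : ℂ) = (M b).trace * (1 - (ρ a * ρ (b + 1)).trace) := by
    rw [hC]
    nth_rewrite 1 [hM_eq b]
    rw [Matrix.mul_smul, trace_smul, Matrix.mul_sub, Matrix.mul_one, trace_sub, hρ1, smul_eq_mul]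
  have := Fin.pow_eq_pow_of_mul_eq_of_mul_succ_eq (α := (α : ℂ)) (β := (β : ℂ))
    (fun b ↦ (M b).trace) (fun b ↦ 1 - (ρ b * ρ (b + 1)).trace)
    (fun b ↦ by rw [← hα b, hC_eq])
    (fun b ↦ by
      rw [← hβ b, hC_eq, trace_mul_comm (ρ (b + 2)), show b + 2 = b + 1 + 1 by grind])
  exact_mod_cast this

/-- The matrix C = (1/4)[[2,1,1,0],[0,2,1,1],[1,0,2,1],[1,1,0,2]] has no qubit
implementation. -/
theorem no_qubit_implementation :
    ¬ ∃ (ρ : Fin 4 → Matrix (Fin 2) (Fin 2) ℂ) (M : Fin 4 → Matrix (Fin 2) (Fin 2) ℂ),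
      QImpl ((1/4 : ℝ) • !![2, 1, 1, 0; 0, 2, 1, 1; 1, 0, 2, 1; 1, 1, 0, 2]) ρ M := by
  rintro ⟨ρ, M, h⟩
  have := h.pow_eq_pow_of_subdiag_eq_zero (α := 1 / 2) (β := 1 / 4) (by norm_num)
    (fun b ↦ by fin_cases b <;> norm_num) (fun b ↦ by fin_cases b <;> simp)
    (fun b ↦ by fin_cases b <;> simp)
  norm_num at this
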